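/- For every n×n real symmetric positive-semidefinite matrix C and integer 0 < s < n, the scaled linx bound tends to +∞ as the scaling parameter tends to 0 from above: lim_{γ→0⁺} linx(C,s;γ) = +∞. -/

import Mathlib

/-!
At the uniform point `x = (s/n)·e` of `P(n,s)` every `1 - xᵢ` is positive, so as `γ → 0⁺` the
determinant `det(γ·C·Diag(x)·C + Diag(e - x))` tends to `∏ (1 - xᵢ) > 0` and its logarithm stays
bounded, while `-s·log γ → +∞`. Since `P(n,s)` is compact and `log t ≤ |t|`, the objective is
bounded above on it, so the supremum `linx(C,s;γ)` dominates the value at this point.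
-/

open Matrix Real Set Filter

noncomputable section

/-- The feasible polytope `P(n,s)`. -/
def PP (n s : ℕ) : Set (Fin n → ℝ) :=
  {x | (∑ i, x i) = (s : ℝ) ∧ ∀ i, 0 ≤ x i ∧ x i ≤ 1}

/-- The scaled linx objective `f(C,s;γ;x)`. -/
def fLinxScaled {n : ℕ} (C : Matrix (Fin n) (Fin n) ℝ) (s : ℕ) (γ : ℝ) (x : Fin n → ℝ) : ℝ :=
  (1 / 2) * (Real.log ((γ • (C * Matrix.diagonal x * C) + Matrix.diagonal fun i => 1 - x i).det)
    - (s : ℝ) * Real.log γ)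

/-- The scaled linx bound `linx(C,s;γ)`. -/
def linxScaled (n s : ℕ) (C : Matrix (Fin n) (Fin n) ℝ) (γ : ℝ) : ℝ :=
  sSup (fLinxScaled C s γ '' PP n s)

open Topology

lemma isCompact_PP (n s : ℕ) : IsCompact (PP n s) := by
  have hPP : PP n s = {x | ∑ i, x i = (s : ℝ)} ∩ Icc 0 1 := by
    ext x
    simp [PP, Pi.le_def, forall_and]
  rw [hPP]
  exact isCompact_Icc.inter_left (isClosed_eq (by fun_prop) continuous_const)

lemma const_div_mem_PP {n s : ℕ} (hn : 0 < n) (hsn : s ≤ n) :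
    (fun _ => (s : ℝ) / n) ∈ PP n s := by
  have hn' : (0 : ℝ) < n := by exact_mod_cast hn
  refine ⟨?_, fun _ => ⟨by positivity, (div_le_one hn').2 (by exact_mod_cast hsn)⟩⟩
  simp only [Finset.sum_const, Finset.card_univ, Fintype.card_fin, nsmul_eq_mul]
  field_simp

lemma continuous_det_linxMatrix {n : ℕ} (C : Matrix (Fin n) (Fin n) ℝ) :
    Continuous fun p : ℝ × (Fin n → ℝ) =>
      (p.1 • (C * diagonal p.2 * C) + diagonal fun i => 1 - p.2 i).det := by
  fun_prop

lemma bddAbove_fLinxScaled_image {n : ℕ} (C : Matrix (Fin n) (Fin n) ℝ) (s : ℕ) (γ : ℝ)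
    {K : Set (Fin n → ℝ)} (hK : IsCompact K) : BddAbove (fLinxScaled C s γ '' K) := by
  have hcont : Continuous fun x : Fin n → ℝ =>
      |(γ • (C * diagonal x * C) + diagonal fun i => 1 - x i).det| :=
    ((continuous_det_linxMatrix C).comp (Continuous.prodMk_right γ)).abs
  obtain ⟨M, hM⟩ := hK.bddAbove_image hcont.continuousOn
  refine ⟨(1 / 2) * (M - s * log γ), ?_⟩
  rintro _ ⟨x, hx, rfl⟩
  have hlog : log (γ • (C * diagonal x * C) + diagonal fun i => 1 - x i).det ≤ M := by
    rw [← log_abs]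
    exact (log_le_self (abs_nonneg _)).trans (hM (mem_image_of_mem _ hx))
  unfold fLinxScaled
  linarith

lemma fLinxScaled_le_linxScaled {n s : ℕ} (C : Matrix (Fin n) (Fin n) ℝ) (γ : ℝ)
    {x : Fin n → ℝ} (hx : x ∈ PP n s) : fLinxScaled C s γ x ≤ linxScaled n s C γ :=
  le_csSup (bddAbove_fLinxScaled_image C s γ (isCompact_PP n s)) (mem_image_of_mem _ hx)

lemma tendsto_fLinxScaled_atTop {n s : ℕ} (C : Matrix (Fin n) (Fin n) ℝ) (hs : 0 < s)
    {x : Fin n → ℝ} (hx : ∀ i, x i < 1) :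
    Tendsto (fun γ => fLinxScaled C s γ x) (𝓝[>] 0) atTop := by
  have hdet : Tendsto (fun γ : ℝ => (γ • (C * diagonal x * C) + diagonal fun i => 1 - x i).det)
      (𝓝[>] 0) (𝓝 (∏ i, (1 - x i))) := by
    have hcont := ((continuous_det_linxMatrix C).comp (Continuous.prodMk_left x)).tendsto 0
    simp only [Function.comp_def, zero_smul, zero_add, det_diagonal] at hcont
    exact hcont.mono_left nhdsWithin_le_nhds
  have hpos : 0 < ∏ i, (1 - x i) := Finset.prod_pos fun i _ => sub_pos.2 (hx i)
  have hlogDet := (continuousAt_log hpos.ne').tendsto.comp hdet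
  have hlogγ : Tendsto (fun γ => -((s : ℝ) * log γ)) (𝓝[>] 0) atTop :=
    tendsto_neg_atBot_atTop.comp
      (tendsto_log_nhdsGT_zero.const_mul_atBot (by exact_mod_cast hs))
  unfold fLinxScaled
  simp_rw [sub_eq_add_neg]
  exact (hlogDet.add_atTop hlogγ).const_mul_atTop one_half_pos

theorem stmt_16_general (n s : ℕ) (hs : 0 < s) (hsn : s < n)
    (C : Matrix (Fin n) (Fin n) ℝ) :
    Filter.Tendsto (fun γ : ℝ => linxScaled n s C γ)
      (nhdsWithin 0 (Set.Ioi 0)) Filter.atTop := by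
  have hn : 0 < n := hs.trans hsn
  have hsn' : (s : ℝ) / n < 1 := (div_lt_one (by exact_mod_cast hn)).2 (by exact_mod_cast hsn)
  exact tendsto_atTop_mono (fun γ => fLinxScaled_le_linxScaled C γ (const_div_mem_PP hn hsn.le))
    (tendsto_fLinxScaled_atTop C hs fun _ => hsn')

theorem stmt_16 (n s : ℕ) (hs : 0 < s) (hsn : s < n)
    (C : Matrix (Fin n) (Fin n) ℝ) (hC : C.PosSemidef) :
    Filter.Tendsto (fun γ : ℝ => linxScaled n s C γ)
      (nhdsWithin 0 (Set.Ioi 0)) Filter.atTop :=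
  stmt_16_general n s hs hsn C
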